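/- arXiv:2509.08614 — 4 statements merged into one kernel-verified Lean document; each statement's English description precedes it below -/
import Mathlib

section
/- Let N_sub, N_s be positive natural numbers and set N = N_sub · N_s. Let M = I_{N_sub} ⊗ 1_{N_s} be the block-diagonal mask matrix whose N_sub diagonal blocks are the N_s × N_s all-ones matrix. Then for every nested permutation matrix Ω = (Π_sub ⊗ I_{N_s}) · diag(Π_1, …, Π_{N_sub}) (with Π_sub an N_sub × N_sub permutation matrix and each Π_i an N_s × N_s permutation matrix), one has M · Ω = Ω · M. -/
open Matrix
open scoped Kronecker

noncomputable section

/-- The permutation matrix of a permutation `σ`: entry `(i, j)` is `1` iff `σ i = j`. -/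
def permMatrix {I : Type*} [DecidableEq I] (σ : Equiv.Perm I) : Matrix I I ℝ :=
  Matrix.of fun i j => if σ i = j then 1 else 0

/-- The block-diagonal matrix `diag(B 0, …, B (Nsub - 1))`, indexed by
`Fin Nsub × Fin Ns` (block index first). -/
def blockDiag {Nsub Ns : ℕ} (B : Fin Nsub → Matrix (Fin Ns) (Fin Ns) ℝ) :
    Matrix (Fin Nsub × Fin Ns) (Fin Nsub × Fin Ns) ℝ :=
  Matrix.of fun p q => if p.1 = q.1 then B p.1 p.2 q.2 else 0

/-- The nested permutation matrix `Ω = (Π_sub ⊗ I_{N_s}) · diag(Π_1, …, Π_{N_sub})`. -/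
def nestedPermMatrix {Nsub Ns : ℕ} (σsub : Equiv.Perm (Fin Nsub))
    (σs : Fin Nsub → Equiv.Perm (Fin Ns)) :
    Matrix (Fin Nsub × Fin Ns) (Fin Nsub × Fin Ns) ℝ :=
  (permMatrix σsub ⊗ₖ (1 : Matrix (Fin Ns) (Fin Ns) ℝ)) *
    blockDiag (fun k => permMatrix (σs k))

/-- The mask matrix `M = I_{N_sub} ⊗ 1_{N_s}`, where `1_{N_s}` is the all-ones matrix. -/
def maskMatrix (Nsub Ns : ℕ) : Matrix (Fin Nsub × Fin Ns) (Fin Nsub × Fin Ns) ℝ :=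
  (1 : Matrix (Fin Nsub) (Fin Nsub) ℝ) ⊗ₖ (Matrix.of fun _ _ => (1 : ℝ))


lemma perm_filter_card {Ns : ℕ} (e : Equiv.Perm (Fin Ns)) (d : Fin Ns) :
    (Finset.filter (fun x => e x = d) Finset.univ).card = 1 := by
  have : Finset.filter (fun x => e x = d) Finset.univ = {e.symm d} := by
    ext x
    simp [Equiv.eq_symm_apply, eq_comm]
  simp [this]

lemma nested_apply {Nsub Ns : ℕ} (σsub : Equiv.Perm (Fin Nsub))
    (σs : Fin Nsub → Equiv.Perm (Fin Ns)) (a c : Fin Nsub) (b d : Fin Ns) :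
    nestedPermMatrix σsub σs (a,b) (c,d) = if σsub a = c ∧ σs c b = d then 1 else 0 := by
  show (∑ q : Fin Nsub × Fin Ns, _) = _
  simp only [nestedPermMatrix, mul_apply, _root_.blockDiag, permMatrix, kroneckerMap_apply,
    Matrix.of_apply, Matrix.one_apply, Fintype.sum_prod_type, mul_ite, mul_one, mul_zero,
    ite_mul, one_mul, zero_mul, Finset.sum_ite_irrel, Finset.sum_const_zero,
    Finset.sum_ite_eq, Finset.sum_ite_eq', Finset.mem_univ, if_true, ite_and]
  simp_rw [← ite_and, and_comm, ite_and, Finset.sum_ite_eq, Finset.mem_univ, if_true]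

/-- For every nested permutation matrix `Ω`, the mask matrix `M = I_{N_sub} ⊗ 1_{N_s}`
satisfies `M · Ω = Ω · M`. -/
theorem mask_mul_nestedPerm_comm {Nsub Ns : ℕ} (hNsub : 0 < Nsub) (hNs : 0 < Ns)
    (σsub : Equiv.Perm (Fin Nsub)) (σs : Fin Nsub → Equiv.Perm (Fin Ns)) :
    maskMatrix Nsub Ns * nestedPermMatrix σsub σs
      = nestedPermMatrix σsub σs * maskMatrix Nsub Ns := by
  ext ⟨a,b⟩ ⟨c,d⟩
  simp [mul_apply, maskMatrix, nested_apply, Fintype.sum_prod_type, Matrix.one_apply,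
    ite_and, perm_filter_card]
end
end

section
/- Let N_sub, N_s be positive integers, N = N_sub · N_s, let M = I_{N_sub} ⊗ 1_{N_s} be the mask matrix, and let U_S^V, U_S^K be J × J real matrices. Define the local attention map on J × N real matrices by F(D) = U_S^V D ((U_S^K D)^T D ⊙ M). Then F satisfies the nested 1D-PE property: for every nested permutation matrix Ω = (Π_sub ⊗ I_{N_s}) · diag(Π_1, …, Π_{N_sub}) and every J × N matrix D, F(D Ω) = F(D) Ω. -/
open Matrix
open scoped Kronecker

noncomputable section

/-- The local attention map `F(D) = U_S^V D ((U_S^K D)ᵀ D ⊙ M)`. -/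
def localAtt {J Nsub Ns : ℕ} (USV USK : Matrix (Fin J) (Fin J) ℝ)
    (D : Matrix (Fin J) (Fin Nsub × Fin Ns) ℝ) : Matrix (Fin J) (Fin Nsub × Fin Ns) ℝ :=
  USV * D * (((USK * D)ᵀ * D) ⊙ maskMatrix Nsub Ns)


section Aux

variable {I : Type*} [DecidableEq I] [Fintype I]

/-- Right multiplication by a permutation matrix reindexes columns. -/
lemma mul_permMatrix {m : Type*} [Fintype m] (A : Matrix m I ℝ) (τ : Equiv.Perm I) :
    A * permMatrix τ = A.submatrix id τ.symm := by
  ext i j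
  simp only [Matrix.mul_apply, permMatrix, Matrix.of_apply, Matrix.submatrix_apply, id]
  have : ∀ k, τ k = j ↔ k = τ.symm j := fun k => τ.apply_eq_iff_eq_symm_apply
  simp only [this, mul_ite, mul_one, mul_zero, Finset.sum_ite_eq', Finset.mem_univ, if_true]

/-- Left multiplication by the transpose of a permutation matrix reindexes rows. -/
lemma transpose_permMatrix_mul {m : Type*} [Fintype m] (A : Matrix I m ℝ)
    (τ : Equiv.Perm I) : (permMatrix τ)ᵀ * A = A.submatrix τ.symm id := by
  ext i j
  simp only [Matrix.mul_apply, permMatrix, Matrix.transpose_apply, Matrix.of_apply,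
    Matrix.submatrix_apply, id]
  have : ∀ k, τ k = i ↔ k = τ.symm i := fun k => τ.apply_eq_iff_eq_symm_apply
  simp only [this, ite_mul, one_mul, zero_mul, Finset.sum_ite_eq', Finset.mem_univ, if_true]

lemma permMatrix_mul_transpose (τ : Equiv.Perm I) :
    permMatrix τ * (permMatrix τ)ᵀ = 1 := by
  ext i j
  simp only [Matrix.mul_apply, permMatrix, Matrix.transpose_apply, Matrix.of_apply]
  rw [Finset.sum_eq_single (τ i)]
  · simp [Matrix.one_apply, eq_comm]
  · intro k _ hk; simp [Ne.symm hk]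
  · simp

end Aux

/-- The permutation on `Fin Nsub × Fin Ns` underlying a nested permutation matrix. -/
def nestedPerm {Nsub Ns : ℕ} (σsub : Equiv.Perm (Fin Nsub))
    (σs : Fin Nsub → Equiv.Perm (Fin Ns)) : Equiv.Perm (Fin Nsub × Fin Ns) where
  toFun p := (σsub p.1, σs (σsub p.1) p.2)
  invFun q := (σsub.symm q.1, (σs q.1).symm q.2)
  left_inv p := by simp
  right_inv q := by simp

lemma nestedPermMatrix_eq {Nsub Ns : ℕ} (σsub : Equiv.Perm (Fin Nsub))
    (σs : Fin Nsub → Equiv.Perm (Fin Ns)) :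
    nestedPermMatrix σsub σs = permMatrix (nestedPerm σsub σs) := by
  ext ⟨i, s⟩ ⟨j, t⟩
  simp only [nestedPermMatrix, Matrix.mul_apply, Matrix.kroneckerMap_apply, _root_.blockDiag,
    Matrix.of_apply, Fintype.sum_prod_type]
  have h1 : ∀ (k : Fin Nsub) (u : Fin Ns),
      permMatrix σsub i k * (1 : Matrix (Fin Ns) (Fin Ns) ℝ) s u *
        (if k = j then permMatrix (σs k) u t else 0)
      = if k = j then if u = s then permMatrix σsub i j * permMatrix (σs j) s t else 0
        else 0 := by
    intro k u
    by_cases hk : k = j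
    · subst hk
      by_cases hu : u = s
      · subst hu; simp [Matrix.one_apply]
      · simp [Matrix.one_apply, Ne.symm hu, hu]
    · simp [hk]
  simp only [h1, Finset.sum_ite_eq', Finset.mem_univ, if_true, Finset.sum_ite_eq]
  simp only [permMatrix, nestedPerm, Matrix.of_apply, Equiv.coe_fn_mk, Prod.mk.injEq]
  by_cases hij : σsub i = j
  · subst hij; simp [ite_and]
  · simp [hij]

lemma maskMatrix_invariant {Nsub Ns : ℕ} (σsub : Equiv.Perm (Fin Nsub))
    (σs : Fin Nsub → Equiv.Perm (Fin Ns)) (p q : Fin Nsub × Fin Ns) :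
    maskMatrix Nsub Ns ((nestedPerm σsub σs).symm p) ((nestedPerm σsub σs).symm q)
      = maskMatrix Nsub Ns p q := by
  simp only [maskMatrix, Matrix.kroneckerMap_apply, nestedPerm, Equiv.coe_fn_symm_mk,
    Matrix.of_apply, mul_one, Matrix.one_apply]
  by_cases h : p.1 = q.1
  · simp [h]
  · simp [h, fun hh => h (σsub.symm.injective hh)]

/-- The local attention map satisfies the nested 1D-PE property. -/
theorem localAtt_nestedOnePE {J Nsub Ns : ℕ} (hNsub : 0 < Nsub) (hNs : 0 < Ns)
    (USV USK : Matrix (Fin J) (Fin J) ℝ)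
    (σsub : Equiv.Perm (Fin Nsub)) (σs : Fin Nsub → Equiv.Perm (Fin Ns))
    (D : Matrix (Fin J) (Fin Nsub × Fin Ns) ℝ) :
    localAtt USV USK (D * nestedPermMatrix σsub σs)
      = localAtt USV USK D * nestedPermMatrix σsub σs := by
  set τ := nestedPerm σsub σs with hτ
  set P := permMatrix τ with hP
  have hΩ : nestedPermMatrix σsub σs = P := nestedPermMatrix_eq σsub σs
  have hPPt : P * Pᵀ = 1 := permMatrix_mul_transpose τ
  set A := (USK * D)ᵀ * D with hA
  have key : ((USK * (D * P))ᵀ * (D * P)) ⊙ maskMatrix Nsub Ns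
      = Pᵀ * (A ⊙ maskMatrix Nsub Ns) * P := by
    have h1 : (USK * (D * P))ᵀ * (D * P) = Pᵀ * A * P := by
      rw [← Matrix.mul_assoc USK D P, Matrix.transpose_mul, hA]
      rw [Matrix.mul_assoc, Matrix.mul_assoc, Matrix.mul_assoc]
    rw [h1]
    rw [transpose_permMatrix_mul, mul_permMatrix, mul_permMatrix, transpose_permMatrix_mul]
    ext p q
    simp only [Matrix.hadamard_apply, Matrix.submatrix_apply, id]
    rw [← maskMatrix_invariant σsub σs p q]
  rw [localAtt, localAtt, hΩ, key, ← hA]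
  calc USV * (D * P) * (Pᵀ * (A ⊙ maskMatrix Nsub Ns) * P)
      = USV * D * (P * Pᵀ * ((A ⊙ maskMatrix Nsub Ns) * P)) := by
        simp only [Matrix.mul_assoc]
    _ = USV * D * (A ⊙ maskMatrix Nsub Ns) * P := by
        rw [hPPt, Matrix.one_mul, ← Matrix.mul_assoc]
end
end

section
/- (Proposition 3) Let N_sub, N_s be positive integers, N = N_sub · N_s, let M = I_{N_sub} ⊗ 1_{N_s} be the mask matrix, and let U_S^V, U_S^K, U_D^V, U_D^K be J × J real matrices. Define the nested attention map on J × N real matrices by C(D) = U_S^V D ((U_S^K D)^T D ⊙ M) + U_D^V D (U_D^K D)^T D. Let Π be a J × J permutation matrix such that Π U_S^K = U_S^K Π, Π U_S^V = U_S^V Π, Π U_D^K = U_D^K Π, and Π U_D^V = U_D^V Π. Then for every nested permutation matrix Ω = (Π_sub ⊗ I_{N_s}) · diag(Π_1, …, Π_{N_sub}) and every J × N matrix D, C(Πᵀ D Ω) = Πᵀ C(D) Ω (the partial-nested 2D-PE property). -/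
open Matrix
open scoped Kronecker

noncomputable section

/-- The nested attention (NATT) map
`C(D) = U_S^V D ((U_S^K D)ᵀ D ⊙ M) + U_D^V D (U_D^K D)ᵀ D`. -/
def nestedAtt {J Nsub Ns : ℕ} (USV USK UDV UDK : Matrix (Fin J) (Fin J) ℝ)
    (D : Matrix (Fin J) (Fin Nsub × Fin Ns) ℝ) : Matrix (Fin J) (Fin Nsub × Fin Ns) ℝ :=
  USV * D * (((USK * D)ᵀ * D) ⊙ maskMatrix Nsub Ns) + UDV * D * ((UDK * D)ᵀ * D)

/-!
Permutation matrices are orthogonal, so replacing `D` by `Πᵀ D Ω` turns every Gram matrix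
`(U D)ᵀ D` with `U` commuting with `Π` into `Ωᵀ (U D)ᵀ D Ω`, and the value products
`U D X` into `Πᵀ (U D X) Ω`. The only point specific to nested attention is the mask:
`Ω` is the permutation matrix of the shear `(k, s) ↦ (σsub k, σs (σsub k) s)`, which maps
blocks to blocks, so `M` is invariant under it and masking commutes with conjugation by `Ω`.
-/

section conj

variable {R m n : Type*} [CommRing R] [Fintype m] [Fintype n]

theorem commute_transpose_of_commute [DecidableEq m] {P U : Matrix m m R}
    (hP : P * Pᵀ = 1) (hP' : Pᵀ * P = 1) (h : Commute P U) : Commute Pᵀ U :=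
  Commute.units_inv_left (u := ⟨P, Pᵀ, hP, hP'⟩) h

theorem mul_conj_of_commute {P U : Matrix m m R} (Q : Matrix n n R) (h : Commute Pᵀ U)
    (A : Matrix m n R) : U * (Pᵀ * A * Q) = Pᵀ * (U * A) * Q := by
  rw [← Matrix.mul_assoc, ← Matrix.mul_assoc, ← h.eq, Matrix.mul_assoc Pᵀ]

theorem transpose_conj_mul_conj [DecidableEq m] {P : Matrix m m R} (Q : Matrix n n R)
    (hP : P * Pᵀ = 1) (A B : Matrix m n R) :
    (Pᵀ * A * Q)ᵀ * (Pᵀ * B * Q) = Qᵀ * (Aᵀ * B) * Q := by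
  simp only [transpose_mul, transpose_transpose, Matrix.mul_assoc]
  rw [← Matrix.mul_assoc P, hP, Matrix.one_mul]

theorem conj_mul_conj [DecidableEq n] (P : Matrix m m R) {Q : Matrix n n R} (hQ : Q * Qᵀ = 1)
    (A : Matrix m n R) (X : Matrix n n R) :
    (Pᵀ * A * Q) * (Qᵀ * X * Q) = Pᵀ * (A * X) * Q := by
  simp only [Matrix.mul_assoc]
  rw [← Matrix.mul_assoc Q, hQ, Matrix.one_mul]

end conj

section permMatrix

variable {n : Type*} [DecidableEq n]

theorem permMatrix_eq (σ : Equiv.Perm n) : permMatrix σ = σ.permMatrix ℝ := by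
  ext i j
  simp [permMatrix, PEquiv.toMatrix_apply]

variable [Fintype n]

theorem permMatrix_mul_transpose_self (σ : Equiv.Perm n) :
    permMatrix σ * (permMatrix σ)ᵀ = 1 := by
  rw [permMatrix_eq, Matrix.transpose_permMatrix, ← Matrix.permMatrix_mul, inv_mul_cancel,
    Matrix.permMatrix_one]

theorem transpose_permMatrix_mul_self (σ : Equiv.Perm n) :
    (permMatrix σ)ᵀ * permMatrix σ = 1 := by
  rw [permMatrix_eq, Matrix.transpose_permMatrix, ← Matrix.permMatrix_mul, mul_inv_cancel,
    Matrix.permMatrix_one]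

theorem transpose_permMatrix_mul_mul_permMatrix (σ : Equiv.Perm n) (Y : Matrix n n ℝ) :
    (permMatrix σ)ᵀ * Y * permMatrix σ = Y.submatrix σ.symm σ.symm := by
  rw [permMatrix_eq, Matrix.transpose_permMatrix, PEquiv.toMatrix_toPEquiv_mul,
    PEquiv.mul_toMatrix_toPEquiv, submatrix_submatrix]
  rfl

theorem conj_permMatrix_hadamard {M : Matrix n n ℝ} (σ : Equiv.Perm n)
    (hM : ∀ i j, M (σ i) (σ j) = M i j) (Y : Matrix n n ℝ) :
    ((permMatrix σ)ᵀ * Y * permMatrix σ) ⊙ M =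
      (permMatrix σ)ᵀ * (Y ⊙ M) * permMatrix σ := by
  ext i j
  simp [transpose_permMatrix_mul_mul_permMatrix, ← hM (σ.symm i) (σ.symm j)]

end permMatrix

section nested

variable {Nsub Ns : ℕ}

theorem nestedPermMatrix_eq_permMatrix_prodShear (σsub : Equiv.Perm (Fin Nsub))
    (σs : Fin Nsub → Equiv.Perm (Fin Ns)) :
    nestedPermMatrix σsub σs = permMatrix (σsub.prodShear fun k => σs (σsub k)) := by
  ext ⟨k, s⟩ ⟨l, t⟩
  rw [nestedPermMatrix, Matrix.mul_apply, Finset.sum_eq_single (σsub k, s)]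
  · simp [_root_.blockDiag, permMatrix, Prod.ext_iff, ite_and]
  · rintro ⟨m, u⟩ - hne
    by_cases h₁ : σsub k = m <;> by_cases h₂ : s = u <;>
      simp_all [Prod.ext_iff, permMatrix]
  · simp

theorem maskMatrix_prodShear_apply (σsub : Equiv.Perm (Fin Nsub))
    (σs : Fin Nsub → Equiv.Perm (Fin Ns)) (p q : Fin Nsub × Fin Ns) :
    maskMatrix Nsub Ns (σsub.prodShear σs p) (σsub.prodShear σs q) =
      maskMatrix Nsub Ns p q := by
  simp [maskMatrix, Matrix.one_apply]

end nested

theorem nestedAtt_partialNestedTwoPE_general {J Nsub Ns : ℕ}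
    (USV USK UDV UDK : Matrix (Fin J) (Fin J) ℝ) (π : Equiv.Perm (Fin J))
    (hSK : permMatrix π * USK = USK * permMatrix π)
    (hSV : permMatrix π * USV = USV * permMatrix π)
    (hDK : permMatrix π * UDK = UDK * permMatrix π)
    (hDV : permMatrix π * UDV = UDV * permMatrix π)
    (σsub : Equiv.Perm (Fin Nsub)) (σs : Fin Nsub → Equiv.Perm (Fin Ns))
    (D : Matrix (Fin J) (Fin Nsub × Fin Ns) ℝ) :
    nestedAtt USV USK UDV UDK ((permMatrix π)ᵀ * D * nestedPermMatrix σsub σs)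
      = (permMatrix π)ᵀ * nestedAtt USV USK UDV UDK D * nestedPermMatrix σsub σs := by
  set τ := σsub.prodShear fun k => σs (σsub k)
  have hP := permMatrix_mul_transpose_self π
  have hQ := permMatrix_mul_transpose_self τ
  have hcomm {U : Matrix (Fin J) (Fin J) ℝ} (h : permMatrix π * U = U * permMatrix π) :
      Commute (permMatrix π)ᵀ U :=
    commute_transpose_of_commute hP (transpose_permMatrix_mul_self π) h
  have hmask := conj_permMatrix_hadamard τ (maskMatrix_prodShear_apply σsub _)
  rw [nestedPermMatrix_eq_permMatrix_prodShear, nestedAtt, nestedAtt,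
    mul_conj_of_commute _ (hcomm hSK), mul_conj_of_commute _ (hcomm hDK),
    transpose_conj_mul_conj _ hP, transpose_conj_mul_conj _ hP, hmask,
    mul_conj_of_commute _ (hcomm hSV), mul_conj_of_commute _ (hcomm hDV),
    conj_mul_conj _ hQ, conj_mul_conj _ hQ, Matrix.mul_add, Matrix.add_mul]

/-- Proposition 3: with parameter-sharing (all weight matrices commute with `Π`), the
nested attention map satisfies the partial-nested 2D-PE property
`C(Πᵀ D Ω) = Πᵀ C(D) Ω`. -/
theorem nestedAtt_partialNestedTwoPE {J Nsub Ns : ℕ} (hNsub : 0 < Nsub) (hNs : 0 < Ns)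
    (USV USK UDV UDK : Matrix (Fin J) (Fin J) ℝ) (π : Equiv.Perm (Fin J))
    (hSK : permMatrix π * USK = USK * permMatrix π)
    (hSV : permMatrix π * USV = USV * permMatrix π)
    (hDK : permMatrix π * UDK = UDK * permMatrix π)
    (hDV : permMatrix π * UDV = UDV * permMatrix π)
    (σsub : Equiv.Perm (Fin Nsub)) (σs : Fin Nsub → Equiv.Perm (Fin Ns))
    (D : Matrix (Fin J) (Fin Nsub × Fin Ns) ℝ) :
    nestedAtt USV USK UDV UDK ((permMatrix π)ᵀ * D * nestedPermMatrix σsub σs)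
      = (permMatrix π)ᵀ * nestedAtt USV USK UDV UDK D * nestedPermMatrix σsub σs :=
  nestedAtt_partialNestedTwoPE_general USV USK UDV UDK π hSK hSV hDK hDV σsub σs D
end
end

section
/- Define f_Diag on n × n real matrices by (f_Diag(X))_{ij} = X_{ij} if i = j and 0 otherwise. If Π_A and Π_B are n × n permutation matrices such that f_Diag(Π_Aᵀ X Π_B) = Π_Aᵀ f_Diag(X) Π_B holds for every n × n real matrix X, then Π_A = Π_B. -/
open Matrix
open scoped Kronecker

noncomputable section

/-- The diagonal extraction map: keeps diagonal entries, zeroes out the rest. -/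
def fDiag {n : ℕ} (X : Matrix (Fin n) (Fin n) ℝ) : Matrix (Fin n) (Fin n) ℝ :=
  Matrix.of fun i j => if i = j then X i j else 0


lemma conj_apply {n : ℕ} (σA σB : Equiv.Perm (Fin n)) (X : Matrix (Fin n) (Fin n) ℝ)
    (i j : Fin n) :
    ((permMatrix σA)ᵀ * X * permMatrix σB) i j = X (σA⁻¹ i) (σB⁻¹ j) := by
  simp [Matrix.mul_apply, permMatrix, Matrix.transpose_apply, ite_mul, mul_ite,
    Equiv.apply_eq_iff_eq_symm_apply, Finset.sum_ite_eq', Finset.sum_ite_eq,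
    Equiv.Perm.inv_def]

/-- If `f_Diag(Π_Aᵀ X Π_B) = Π_Aᵀ f_Diag(X) Π_B` for every `X`, then `Π_A = Π_B`. -/
theorem fDiag_equivariance_forces_eq {n : ℕ} (σA σB : Equiv.Perm (Fin n))
    (h : ∀ X : Matrix (Fin n) (Fin n) ℝ,
      fDiag ((permMatrix σA)ᵀ * X * permMatrix σB)
        = (permMatrix σA)ᵀ * fDiag X * permMatrix σB) :
    permMatrix σA = permMatrix σB := by
  have key : ∀ i, σA⁻¹ i = σB⁻¹ i := by
    intro i
    have := congrFun (congrFun (h (Matrix.of fun _ _ => (1:ℝ))) i) i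
    rw [conj_apply] at this
    simp only [fDiag, Matrix.of_apply, if_pos rfl] at this
    by_contra hne
    rw [if_neg hne] at this
    simp [conj_apply] at this
  have : σA = σB := by
    have : σA⁻¹ = σB⁻¹ := Equiv.ext key
    simpa using congrArg Inv.inv this
  rw [this]
end
end
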